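/- Let P = {V(Ω₁),…,V(Ω_p)} be a partition of V into p disjoint nonempty blocks, and let s ∈ {0,1}^N be a sampling pattern with exactly one 1 per block (say at node s_j ∈ V(Ω_j)) such that no two sampling nodes are adjacent (W(s_i, s_j) = 0 for i ≠ j, and more generally if s(v) = 1 then s(u) = 0 for all u with W(u,v) > 0). Suppose that for each j there is κ_j > 0 with Σ_{u ∈ V(Ω_j)} W(s_j, u) ≥ κ_j (a lower bound on the within-block degree of the sampling node, playing the role of the Sobolev bound C_{δ_j}/vol(Ω_j)^{2/δ_j}). Then the redness of s satisfies R_s ≤ (μ₂ + μ_N)² (1 − p/N)² / (4 μ₂ μ_N min_j κ_j). -/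

import Mathlib

open Finset Matrix

/-!
Write `ŝ = Uᵀ s`. By Parseval and `ŝ(1) = p / √N`, the mass `A = ∑_{ℓ ≥ 2} ŝ(ℓ)²` equals
`p (1 - p/N)`, while the energy `B = ∑_{ℓ ≥ 2} μ_ℓ ŝ(ℓ)² = sᵀ L s` is, because no two sampling
nodes are adjacent, the total degree of the sampling nodes, hence at least `p · min κ`.
On `[μ₂, μ_N]` one has `1/μ ≤ (μ₂ + μ_N - μ) / (μ₂ μ_N)` (as `(μ - μ₂)(μ_N - μ) ≥ 0`), so
`∑ ŝ²/μ ≤ ((μ₂ + μ_N) A - B) / (μ₂ μ_N)`, and `x - B ≤ x² / (4B)` finishes the bound.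
-/

section Spectral

variable {n R : Type*} [Fintype n] [DecidableEq n] [CommRing R] {U L : Matrix n n R}

theorem Matrix.dotProduct_transpose_mulVec_self (hU : Uᵀ * U = 1) (x : n → R) :
    (Uᵀ *ᵥ x) ⬝ᵥ (Uᵀ *ᵥ x) = x ⬝ᵥ x := by
  rw [dotProduct_mulVec, vecMul_transpose, mulVec_mulVec, mul_eq_one_comm.mp hU, one_mulVec]

theorem Matrix.eq_mul_diagonal_mul_transpose (hU : Uᵀ * U = 1) {μ : n → R}
    (heig : ∀ ℓ, L *ᵥ (fun i => U i ℓ) = μ ℓ • fun i => U i ℓ) :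
    L = U * diagonal μ * Uᵀ := by
  have hLU : L * U = U * diagonal μ := by
    ext i ℓ
    rw [mul_diagonal]
    simpa [mul_comm, mulVec, dotProduct, mul_apply] using congrFun (heig ℓ) i
  rw [← hLU, Matrix.mul_assoc, mul_eq_one_comm.mp hU, Matrix.mul_one]

theorem Matrix.dotProduct_mulVec_eq_sum_eigenvalue_mul_sq (hU : Uᵀ * U = 1) {μ : n → R}
    (heig : ∀ ℓ, L *ᵥ (fun i => U i ℓ) = μ ℓ • fun i => U i ℓ) (x : n → R) :
    x ⬝ᵥ L *ᵥ x = ∑ ℓ, μ ℓ * (Uᵀ *ᵥ x) ℓ ^ 2 := by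
  rw [eq_mul_diagonal_mul_transpose hU heig, ← mulVec_mulVec, ← mulVec_mulVec, dotProduct_mulVec,
    ← mulVec_transpose]
  simp only [dotProduct, mulVec_diagonal]
  exact sum_congr rfl fun ℓ _ => by ring

theorem Matrix.dotProduct_diagonal_sub_mulVec_of_indicator (d : n → R) (W : Matrix n n R)
    (T : Finset n) (hT : ∀ u ∈ T, ∀ v ∈ T, W u v = 0) (x : n → R)
    (hx : ∀ v, x v = if v ∈ T then 1 else 0) :
    x ⬝ᵥ (diagonal d - W) *ᵥ x = ∑ u ∈ T, d u := by
  have hW : x ⬝ᵥ W *ᵥ x = 0 := by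
    refine sum_eq_zero fun u _ => ?_
    simp only [mulVec, dotProduct, hx, Finset.mul_sum]
    refine sum_eq_zero fun v _ => ?_
    by_cases hu : u ∈ T <;> by_cases hv : v ∈ T <;> simp [hu, hv, hT u]
  rw [sub_mulVec, dotProduct_sub, hW, sub_zero]
  simp only [dotProduct, mulVec_diagonal, hx]
  simp

end Spectral

theorem Matrix.sum_erase_sq_transpose_mulVec {n : Type*} [Fintype n] [DecidableEq n]
    {U : Matrix n n ℝ} (hU : Uᵀ * U = 1) {k : n} (hUk : ∀ i, U i k = 1 / √(Fintype.card n))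
    (x : n → ℝ) :
    ∑ ℓ ∈ univ.erase k, (Uᵀ *ᵥ x) ℓ ^ 2 = ∑ i, x i ^ 2 - (∑ i, x i) ^ 2 / Fintype.card n := by
  have hparseval : ∑ ℓ, (Uᵀ *ᵥ x) ℓ ^ 2 = ∑ i, x i ^ 2 := by
    simpa only [dotProduct, sq] using dotProduct_transpose_mulVec_self hU x
  have hk : (Uᵀ *ᵥ x) k = (∑ i, x i) / √(Fintype.card n) := by
    simp only [mulVec, dotProduct, transpose_apply, hUk, one_div_mul_eq_div, sum_div]
  rw [sum_erase_eq_sub (mem_univ k), hparseval, hk, div_pow, Real.sq_sqrt (Nat.cast_nonneg _)]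

theorem sub_le_sq_div_four_mul (a : ℝ) {b : ℝ} (hb : 0 < b) : a - b ≤ a ^ 2 / (4 * b) := by
  rw [le_div_iff₀ (by positivity)]
  nlinarith [sq_nonneg (a - 2 * b)]

theorem sq_div_le_of_mem_Icc {m M t : ℝ} (hm : 0 < m) (ht : t ∈ Set.Icc m M) (x : ℝ) :
    x ^ 2 / t ≤ (m + M - t) * x ^ 2 / (m * M) := by
  obtain ⟨hmt, htM⟩ := ht
  have ht0 : 0 < t := hm.trans_le hmt
  rw [div_le_div_iff₀ ht0 (by nlinarith)]
  nlinarith [mul_nonneg (mul_nonneg (sq_nonneg x) (sub_nonneg.mpr hmt)) (sub_nonneg.mpr htM)]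

theorem sum_sq_div_le_of_mem_Icc {ι : Type*} (S : Finset ι) {b μ : ι → ℝ} {m M B : ℝ}
    (hm : 0 < m) (hμ : ∀ ℓ ∈ S, μ ℓ ∈ Set.Icc m M) (hB : 0 < B)
    (hBle : B ≤ ∑ ℓ ∈ S, μ ℓ * b ℓ ^ 2) :
    ∑ ℓ ∈ S, b ℓ ^ 2 / μ ℓ ≤ ((m + M) * ∑ ℓ ∈ S, b ℓ ^ 2) ^ 2 / (4 * m * M * B) := by
  set A := ∑ ℓ ∈ S, b ℓ ^ 2
  set E := ∑ ℓ ∈ S, μ ℓ * b ℓ ^ 2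
  obtain ⟨ℓ, hℓ⟩ : S.Nonempty := nonempty_of_sum_ne_zero (hB.trans_le hBle).ne'
  have hM : 0 < M := hm.trans_le ((hμ ℓ hℓ).1.trans (hμ ℓ hℓ).2)
  calc ∑ ℓ ∈ S, b ℓ ^ 2 / μ ℓ ≤ ∑ ℓ ∈ S, (m + M - μ ℓ) * b ℓ ^ 2 / (m * M) :=
        sum_le_sum fun ℓ hℓ => sq_div_le_of_mem_Icc hm (hμ ℓ hℓ) (b ℓ)
    _ = ((m + M) * A - E) / (m * M) := by
        rw [← sum_div, mul_sum, ← sum_sub_distrib]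
        simp_rw [sub_mul]
    _ ≤ ((m + M) * A) ^ 2 / (4 * E) / (m * M) := by
        gcongr
        exact sub_le_sq_div_four_mul _ (hB.trans_le hBle)
    _ ≤ ((m + M) * A) ^ 2 / (4 * B) / (m * M) := by gcongr
    _ = ((m + M) * A) ^ 2 / (4 * m * M * B) := by
        rw [div_div]
        ring_nf

theorem Function.Injective.of_mem_of_pairwise_disjoint {ι α : Type*} {Ω : ι → Finset α}
    (hdisj : ∀ i j, i ≠ j → Disjoint (Ω i) (Ω j)) {f : ι → α} (hf : ∀ i, f i ∈ Ω i) :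
    Function.Injective f := fun i j hij => by
  by_contra h
  exact disjoint_left.mp (hdisj i j h) (hf i) (hij ▸ hf j)

theorem eq_ite_mem_image_of_eq_one_iff {ι α R : Type*} [Fintype ι] [DecidableEq α]
    [MulZeroOneClass R] [NeZero (1 : R)] {f : ι → α} {x : α → R} (hx01 : ∀ v, x v = 0 ∨ x v = 1)
    (hx1 : ∀ v, x v = 1 ↔ ∃ i, f i = v) (v : α) :
    x v = if v ∈ univ.image f then 1 else 0 := by
  have hmem : v ∈ univ.image f ↔ x v = 1 := by simp [hx1]
  rcases hx01 v with h | h <;> simp [hmem, h]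

theorem Monotone.mem_Icc_of_val_ne_zero {α : Type*} [Preorder α] {N : ℕ} {μ : Fin N → α}
    (hμ : Monotone μ) (hN : 1 < N) {ℓ : Fin N} (hℓ : ℓ.val ≠ 0) :
    μ ℓ ∈ Set.Icc (μ ⟨1, hN⟩) (μ ⟨N - 1, by omega⟩) :=
  ⟨hμ (Fin.mk_le_of_le_val (Nat.one_le_iff_ne_zero.mpr hℓ)),
    hμ (Fin.le_def.mpr (Nat.le_sub_one_of_lt ℓ.isLt))⟩

/-- Redness bound from a partition (Theorem 3): if `s` has exactly one `1` per block of a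
partition of `V` into `p` blocks, no two sampling nodes are adjacent, and the within-block
degree of each sampling node is at least `κ_j > 0`, then
`R_s ≤ (μ₂+μ_N)²(1-p/N)² / (4 μ₂ μ_N min_j κ_j)`. -/
theorem stmt_18 {N : ℕ} (hN : 2 ≤ N)
    (W : Matrix (Fin N) (Fin N) ℝ)
    (hWnonneg : ∀ u v, 0 ≤ W u v)
    (L : Matrix (Fin N) (Fin N) ℝ)
    (hL : L = Matrix.diagonal (fun u => ∑ v, W u v) - W)
    (μ : Fin N → ℝ) (U : Matrix (Fin N) (Fin N) ℝ)
    (hU : Uᵀ * U = 1)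
    (hμmono : Monotone μ)
    (hμ0 : μ (⟨0, by omega⟩ : Fin N) = 0)
    (hμ2 : 0 < μ (⟨1, by omega⟩ : Fin N))
    (hU0 : ∀ i, U i (⟨0, by omega⟩ : Fin N) = 1 / Real.sqrt N)
    (heig : ∀ ℓ, L.mulVec (fun i => U i ℓ) = μ ℓ • (fun i => U i ℓ))
    (p : ℕ) (hp0 : 0 < p)
    (Ω : Fin p → Finset (Fin N))
    (hdisj : ∀ i j, i ≠ j → Disjoint (Ω i) (Ω j))
    (sj : Fin p → Fin N) (hsj : ∀ j, sj j ∈ Ω j)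
    (s : Fin N → ℝ)
    (hs01 : ∀ v, s v = 0 ∨ s v = 1)
    (hs1 : ∀ v, s v = 1 ↔ ∃ j, sj j = v)
    (hadj : ∀ u v, s v = 1 → 0 < W u v → s u = 0)
    (κ : Fin p → ℝ) (hκpos : ∀ j, 0 < κ j)
    (hκ : ∀ j, κ j ≤ ∑ u ∈ Ω j, W (sj j) u) :
    (1 / (p : ℝ)) *
        ∑ ℓ ∈ Finset.univ.erase (⟨0, by omega⟩ : Fin N), ((Uᵀ.mulVec s) ℓ) ^ 2 / μ ℓ ≤
      (μ (⟨1, by omega⟩ : Fin N) + μ (⟨N - 1, by omega⟩ : Fin N)) ^ 2 *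
          (1 - (p : ℝ) / N) ^ 2 /
        (4 * μ (⟨1, by omega⟩ : Fin N) * μ (⟨N - 1, by omega⟩ : Fin N) *
          Finset.univ.inf' (Finset.univ_nonempty_iff.mpr (Fin.pos_iff_nonempty.mp hp0)) κ) := by
  set e0 : Fin N := ⟨0, by omega⟩
  set c := univ.inf' (univ_nonempty_iff.mpr (Fin.pos_iff_nonempty.mp hp0)) κ
  have hc : 0 < c := (lt_inf'_iff _).mpr fun j _ => hκpos j
  have hsj_inj : Function.Injective sj := .of_mem_of_pairwise_disjoint hdisj hsj
  set T := univ.image sj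
  have hs : ∀ v, s v = if v ∈ T then 1 else 0 := eq_ite_mem_image_of_eq_one_iff hs01 hs1
  have hmass : ∑ ℓ ∈ univ.erase e0, (Uᵀ *ᵥ s) ℓ ^ 2 = p * (1 - p / N) := by
    rw [sum_erase_sq_transpose_mulVec hU (by simpa using hU0) s]
    simp [hs, T, card_image_of_injective _ hsj_inj]
    field_simp
  have hindep : ∀ u ∈ T, ∀ v ∈ T, W u v = 0 := by
    intro u hu v hv
    by_contra h
    simpa [hs, hu] using hadj u v (by simp [hs, hv]) ((hWnonneg u v).lt_of_ne' h)
  have hdeg : ∀ j, c ≤ ∑ u, W (sj j) u := fun j =>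
    (inf'_le _ (mem_univ j)).trans <| (hκ j).trans <|
      sum_le_sum_of_subset_of_nonneg (subset_univ _) fun u _ _ => hWnonneg _ _
  have henergy : p * c ≤ ∑ ℓ ∈ univ.erase e0, μ ℓ * (Uᵀ *ᵥ s) ℓ ^ 2 := by
    rw [sum_erase_eq_sub (mem_univ e0), hμ0, zero_mul, sub_zero,
      ← dotProduct_mulVec_eq_sum_eigenvalue_mul_sq hU heig, hL,
      dotProduct_diagonal_sub_mulVec_of_indicator _ _ T hindep s hs, sum_image hsj_inj.injOn]
    simpa using card_nsmul_le_sum univ _ c fun j _ => hdeg j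
  have hbounds : ∀ ℓ ∈ univ.erase e0,
      μ ℓ ∈ Set.Icc (μ ⟨1, by omega⟩) (μ ⟨N - 1, by omega⟩) := fun ℓ hℓ =>
    hμmono.mem_Icc_of_val_ne_zero (by omega) fun h => ne_of_mem_erase hℓ (Fin.ext h)
  calc _ ≤ (1 / (p : ℝ)) * (((μ ⟨1, by omega⟩ + μ ⟨N - 1, by omega⟩) * (p * (1 - p / N))) ^ 2 /
        (4 * μ ⟨1, by omega⟩ * μ ⟨N - 1, by omega⟩ * (p * c))) := by
        gcongr
        rw [← hmass]
        exact sum_sq_div_le_of_mem_Icc _ hμ2 hbounds (by positivity) henergy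
    _ = _ := by field_simp
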